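/- arXiv:1710.02330 — 2 statements merged into one kernel-verified Lean document; each statement's English description precedes it below -/
import Mathlib

section
/- Let B₃ be the group with presentation ⟨x, y ∥ x y x = y x y⟩. Then B₃ has a proper subgroup (in fact a normal subgroup of index 6) isomorphic to the direct product ℤ × F₂, where F₂ is the free group of rank 2. -/
/-- The single braid relator `x y x (y x y)⁻¹` in the free group on two generators. -/
def braidRel3 : FreeGroup (Fin 2) :=
  FreeGroup.of 0 * FreeGroup.of 1 * FreeGroup.of 0 *
    (FreeGroup.of 1 * FreeGroup.of 0 * FreeGroup.of 1)⁻¹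

/-- The braid group on 3 strands `B₃ = ⟨x, y ∥ x y x = y x y⟩`. -/
def BraidGroup3 : Type := PresentedGroup ({braidRel3} : Set (FreeGroup (Fin 2)))

instance : Group BraidGroup3 := by unfold BraidGroup3; infer_instance

/-!
Sending `x ↦ t` and `y ↦ a t` identifies `B₃` with the semidirect product `F(a, b) ⋊ ℤ` in which
the generator `t` acts by `σ : a ↦ b, b ↦ a⁻¹ b`; the inverse map is `a ↦ y x⁻¹`, `b ↦ x y x⁻²`,
`t ↦ x`. The automorphism `σ⁶` is conjugation by `u = b⁻¹ a b a⁻¹`, so in the index-6 subgroup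
`F₂ ⋊ 6ℤ` the element `u⁻¹ t⁶` is central, and together with `F₂` it generates a copy of
`ℤ × F₂`.
-/

namespace SemidirectProduct

open Multiplicative

variable {N : Type*} [Group N] {φ : Multiplicative ℤ →* MulAut N}

theorem lift_cond_of_zpowersHom {G : Type*} [Group G] {σ : MulAut N} {f : N →* G} {x : G}
    (h : f.comp σ.toMonoidHom = (MulAut.conj x).toMonoidHom.comp f) (m : Multiplicative ℤ) :
    f.comp (zpowersHom _ σ m).toMonoidHom =
      (MulAut.conj (zpowersHom G x m)).toMonoidHom.comp f := by
  have h_fwd (w : N) : f (σ w) = x * f w * x⁻¹ := DFunLike.congr_fun h w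
  have h_inv (w : N) : f (σ⁻¹ w) = x⁻¹ * f w * x := by
    rw [← MulAut.apply_inv_self _ σ w, h_fwd, MulAut.inv_apply_self]
    group
  ext w
  simp only [zpowersHom_apply, MonoidHom.comp_apply, MulEquiv.coe_toMonoidHom, MulAut.conj_apply]
  induction toAdd m using Int.induction_on generalizing w with
  | zero => simp
  | succ k ih => rw [zpow_add_one, MulAut.mul_apply, ih, h_fwd, zpow_add_one]; group
  | pred k ih => rw [zpow_sub_one, MulAut.mul_apply, ih, h_inv, zpow_sub_one]; group

def rightHomMod (n : ℕ) : N ⋊[φ] Multiplicative ℤ →* Multiplicative (ZMod n) :=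
  (AddMonoidHom.toMultiplicative (Int.castAddHom (ZMod n))).comp rightHom

theorem rightHomMod_surjective (n : ℕ) :
    Function.Surjective (rightHomMod n : N ⋊[φ] Multiplicative ℤ →* _) :=
  fun c => by
    obtain ⟨k, hk⟩ := ZMod.intCast_surjective (toAdd c)
    exact ⟨inr (ofAdd k), by simp [rightHomMod, hk]⟩

theorem index_ker_rightHomMod (n : ℕ) [NeZero n] :
    (rightHomMod n : N ⋊[φ] Multiplicative ℤ →* _).ker.index = n := by
  rw [Subgroup.index_ker, MonoidHom.range_eq_top.mpr (rightHomMod_surjective n),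
    Subgroup.card_top, Nat.card_congr toAdd, Nat.card_zmod]

theorem mem_ker_rightHomMod {n : ℕ} {g : N ⋊[φ] Multiplicative ℤ} :
    g ∈ (rightHomMod n).ker ↔ (n : ℤ) ∣ toAdd g.right := by
  rw [MonoidHom.mem_ker, ← ZMod.intCast_zmod_eq_zero_iff_dvd, ← ofAdd_eq_one]
  rfl

variable {n : ℕ} {u : N}

/-- Since `inr tⁿ` acts on `N` as conjugation by `u`, the element `u⁻¹ tⁿ` centralizes `N`. -/
def centralizerGen (φ : Multiplicative ℤ →* MulAut N) (n : ℕ) (u : N) :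
    N ⋊[φ] Multiplicative ℤ :=
  inl u⁻¹ * inr (ofAdd (n : ℤ))

variable (hu : φ (ofAdd (n : ℤ)) = MulAut.conj u)
include hu

theorem commute_centralizerGen_inl (w : N) : Commute (centralizerGen φ n u) (inl w) := by
  ext <;> simp [centralizerGen, mul_left, mul_right, hu]
  group

theorem commute_inl_inv_inr : Commute (inl u⁻¹ : N ⋊[φ] _) (inr (ofAdd (n : ℤ))) := by
  ext <;> simp [mul_left, mul_right, hu]

theorem centralizerGen_zpow (k : ℤ) :
    centralizerGen φ n u ^ k = inl (u ^ (-k)) * inr (ofAdd (n * k)) := by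
  rw [centralizerGen, (commute_inl_inv_inr hu).mul_zpow, ← map_zpow, ← map_zpow, inv_zpow',
    ← ofAdd_zsmul, smul_eq_mul, mul_comm]

def prodEmbedding : Multiplicative ℤ × N →* N ⋊[φ] Multiplicative ℤ :=
  (zpowersHom _ (centralizerGen φ n u)).noncommCoprod inl
    fun m w => (commute_centralizerGen_inl hu w).zpow_left (toAdd m)

theorem prodEmbedding_apply (m : Multiplicative ℤ) (w : N) :
    prodEmbedding hu (m, w) = inl (w * u ^ (-toAdd m)) * inr (ofAdd (n * toAdd m)) := by
  change centralizerGen φ n u ^ toAdd m * inl w = _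
  rw [((commute_centralizerGen_inl hu w).zpow_left _).eq, centralizerGen_zpow hu, ← mul_assoc,
    ← map_mul]

theorem prodEmbedding_injective (hn : n ≠ 0) : Function.Injective (prodEmbedding hu) := by
  rw [injective_iff_map_eq_one]
  rintro ⟨m, w⟩ h
  rw [prodEmbedding_apply] at h
  have hm : toAdd m = 0 := by
    have := congrArg (toAdd ∘ right) h
    simp only [Function.comp_apply, mul_right, right_inl, right_inr, one_mul, toAdd_ofAdd] at this
    simpa [hn] using this
  have hw : w = 1 := inl_injective (by simpa [hm] using h)
  exact Prod.ext (toAdd_eq_zero.mp hm) hw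

theorem range_prodEmbedding : (prodEmbedding hu).range = (rightHomMod n).ker := by
  ext g
  rw [mem_ker_rightHomMod]
  constructor
  · rintro ⟨⟨m, w⟩, rfl⟩
    rw [prodEmbedding_apply, mul_right, right_inl, right_inr, one_mul, toAdd_ofAdd]
    exact dvd_mul_right _ _
  · rintro ⟨k, hk⟩
    refine ⟨(ofAdd k, g.left * u ^ k), ?_⟩
    rw [prodEmbedding_apply, toAdd_ofAdd, ← hk, ofAdd_toAdd, zpow_neg, mul_inv_cancel_right,
      inl_left_mul_inr_right]

noncomputable def kerRightHomModEquivProd (hn : n ≠ 0) :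
    (rightHomMod n : N ⋊[φ] Multiplicative ℤ →* _).ker ≃* Multiplicative ℤ × N :=
  (MulEquiv.subgroupCongr (range_prodEmbedding hu).symm).trans
    (MonoidHom.ofInjective (prodEmbedding_injective hu hn)).symm

end SemidirectProduct

namespace BraidGroup3

def x : BraidGroup3 := PresentedGroup.of 0
def y : BraidGroup3 := PresentedGroup.of 1

theorem x_mul_y_mul_x : x * y * x = y * x * y := by
  rw [← mul_inv_eq_one]
  exact (QuotientGroup.eq_one_iff braidRel3).mpr (Subgroup.subset_normalClosure rfl)

section lift

variable {G : Type*} [Group G] (p q : G) (h : p * q * p = q * p * q)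

def lift : BraidGroup3 →* G :=
  PresentedGroup.toGroup (f := ![p, q]) <| by
    rintro r rfl
    simp [braidRel3, h]

@[simp]
theorem lift_x : lift p q h x = p := PresentedGroup.toGroup.of _

@[simp]
theorem lift_y : lift p q h y = q := PresentedGroup.toGroup.of _

end lift

theorem hom_ext {G : Type*} [Group G] {f g : BraidGroup3 →* G} (hx : f x = g x)
    (hy : f y = g y) : f = g :=
  PresentedGroup.ext fun i => by fin_cases i <;> assumption

open SemidirectProduct Multiplicative

local notation "F₂" => FreeGroup (Fin 2)

abbrev a : F₂ := FreeGroup.of 0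
abbrev b : F₂ := FreeGroup.of 1

/-- `a ↦ b, b ↦ a⁻¹ b`, the action of the generator `x` on the free normal subgroup
generated by `a = y x⁻¹` and `b = x y x⁻²`. -/
def monodromy : MulAut F₂ :=
  MonoidHom.toMulEquiv (FreeGroup.lift ![b, a⁻¹ * b]) (FreeGroup.lift ![a * b⁻¹, a])
    (FreeGroup.ext_hom _ _ fun i => by fin_cases i <;> simp)
    (FreeGroup.ext_hom _ _ fun i => by fin_cases i <;> simp)

@[simp]
theorem monodromy_a : monodromy a = b := by simp [monodromy]

@[simp]
theorem monodromy_b : monodromy b = a⁻¹ * b := by simp [monodromy]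

theorem monodromy_pow_six : monodromy ^ 6 = MulAut.conj (b⁻¹ * a * b * a⁻¹) := by
  refine MulEquiv.toMonoidHom_injective <|
    FreeGroup.ext_hom _ _ <| Fin.forall_fin_two.mpr ⟨?_, ?_⟩ <;>
  · simp only [MulEquiv.coe_toMonoidHom, MulAut.conj_apply]
    simp only [pow_succ, pow_zero, one_mul, MulAut.mul_apply, monodromy_a, monodromy_b, map_mul,
      map_inv]
    group

abbrev SemidirectModel := F₂ ⋊[zpowersHom _ monodromy] Multiplicative ℤ

def toSemidirect : BraidGroup3 →* SemidirectModel :=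
  lift (inr (ofAdd 1)) (inl a * inr (ofAdd 1)) <| by
    ext <;> simp [mul_left, mul_right, pow_two, MulAut.mul_apply]

def freeToBraid : F₂ →* BraidGroup3 := FreeGroup.lift ![y * x⁻¹, x * y * x⁻¹ * x⁻¹]

@[simp]
theorem freeToBraid_a : freeToBraid a = y * x⁻¹ := FreeGroup.lift_apply_of

@[simp]
theorem freeToBraid_b : freeToBraid b = x * y * x⁻¹ * x⁻¹ := FreeGroup.lift_apply_of

theorem freeToBraid_comp_monodromy :
    freeToBraid.comp monodromy.toMonoidHom = (MulAut.conj x).toMonoidHom.comp freeToBraid := by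
  refine FreeGroup.ext_hom _ _ <| Fin.forall_fin_two.mpr ⟨?_, ?_⟩ <;>
    simp only [MonoidHom.comp_apply, MulEquiv.coe_toMonoidHom, MulAut.conj_apply]
  · rw [monodromy_a, freeToBraid_a, freeToBraid_b]
    group
  · rw [monodromy_b, map_mul, map_inv, freeToBraid_a, freeToBraid_b]
    calc (y * x⁻¹)⁻¹ * (x * y * x⁻¹ * x⁻¹)
        = x * y⁻¹ * (x * y * x) * x⁻¹ * x⁻¹ * x⁻¹ := by group
      _ = x * y⁻¹ * (y * x * y) * x⁻¹ * x⁻¹ * x⁻¹ := by rw [x_mul_y_mul_x]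
      _ = x * (x * y * x⁻¹ * x⁻¹) * x⁻¹ := by group

def ofSemidirect : SemidirectModel →* BraidGroup3 :=
  SemidirectProduct.lift freeToBraid (zpowersHom _ x)
    (lift_cond_of_zpowersHom freeToBraid_comp_monodromy)

theorem ofSemidirect_comp_toSemidirect : ofSemidirect.comp toSemidirect = MonoidHom.id _ :=
  hom_ext (by simp [toSemidirect, ofSemidirect]) (by simp [toSemidirect, ofSemidirect])

theorem toSemidirect_comp_ofSemidirect : toSemidirect.comp ofSemidirect = MonoidHom.id _ := by
  refine SemidirectProduct.hom_ext
    (FreeGroup.ext_hom _ _ <| Fin.forall_fin_two.mpr ⟨?_, ?_⟩) (MonoidHom.ext_mint ?_)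
  · simp [toSemidirect, ofSemidirect]
  · ext <;> simp [toSemidirect, ofSemidirect, mul_left, mul_right]
  · simp [toSemidirect, ofSemidirect]

def equivSemidirect : BraidGroup3 ≃* SemidirectModel :=
  MonoidHom.toMulEquiv _ _ ofSemidirect_comp_toSemidirect toSemidirect_comp_ofSemidirect

theorem zpowersHom_monodromy_six :
    zpowersHom _ monodromy (ofAdd ((6 : ℕ) : ℤ)) = MulAut.conj (b⁻¹ * a * b * a⁻¹) := by
  rw [zpowersHom_apply, toAdd_ofAdd, zpow_natCast, monodromy_pow_six]

end BraidGroup3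

/-- The braid group `B₃ = ⟨x, y ∥ x y x = y x y⟩` has a proper normal subgroup of
index 6 isomorphic to `ℤ × F₂`, the direct product of the infinite cyclic group
with the free group of rank 2. -/
theorem stmt_4 :
    ∃ H : Subgroup BraidGroup3, H ≠ ⊤ ∧ H.Normal ∧ H.index = 6 ∧
      Nonempty (H ≃* (Multiplicative ℤ × FreeGroup (Fin 2))) := by
  open BraidGroup3 SemidirectProduct in
  let K := (rightHomMod 6 : SemidirectModel →* _).ker
  let e : SemidirectModel ≃* BraidGroup3 := equivSemidirect.symm
  have h_index : (K.map (e : SemidirectModel →* BraidGroup3)).index = 6 := by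
    rw [Subgroup.index_map_equiv, index_ker_rightHomMod]
  have h_normal : (K.map (e : SemidirectModel →* BraidGroup3)).Normal :=
    (MonoidHom.normal_ker _).map _ e.surjective
  refine ⟨K.map (e : SemidirectModel →* BraidGroup3), fun h_top => ?_, h_normal, h_index,
    ⟨(e.subgroupMap K).symm.trans
      (kerRightHomModEquivProd zpowersHom_monodromy_six (by norm_num))⟩⟩
  rw [h_top, Subgroup.index_top] at h_index
  exact absurd h_index (by norm_num)
end

section
/- The group (⊕_{i ∈ ℕ} ℤ/3ℤ) × ℤ, the direct product of a countably infinite direct sum of cyclic groups of order 3 with an infinite cyclic group, has no faithful finite-dimensional linear representation over any field of characteristic different from 3: for every field K with char K ≠ 3 and every natural number n there is no injective group homomorphism from (⊕_{i ∈ ℕ} ℤ/3ℤ) × ℤ into GL_n(K). -/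
/-!
The elements `(x, 0)` with `x` supported in `{0, …, n}` form an elementary abelian `3`-group of
order `3 ^ (n + 1)`. Over an algebraically closed field in which `3 ≠ 0`, commuting matrices
with `A ^ 3 = 1` are simultaneously diagonalizable with eigenvalues among the at most three cube
roots of unity, and each of them is determined by its eigenvalues on the at most `n` nonzero
joint eigenspaces. Hence at most `3 ^ n` of them are distinct, so no injective homomorphism into
`GL n K` exists.
-/

open Module Polynomial

namespace Module.End

variable {K V ι : Type*} [Field K] [AddCommGroup V] [Module K V]

theorem isSemisimple_of_pow_eq_one {f : End K V} {m : ℕ} (hm : (m : K) ≠ 0) (hf : f ^ m = 1) :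
    f.IsSemisimple :=
  isSemisimple_of_squarefree_aeval_eq_zero (X_pow_sub_one_separable_iff.mpr hm).squarefree
    (by simp [hf])

theorem HasEigenvector.pow_eq_one {f : End K V} {μ : K} {v : V} (hv : f.HasEigenvector μ v)
    {m : ℕ} (hf : f ^ m = 1) : μ ^ m = 1 := by
  refine smul_left_injective K hv.2 ?_
  simp only [← hv.pow_apply m, hf, one_apply, one_smul]

def jointEigenspace (f : ι → End K V) (χ : ι → K) : Submodule K V :=
  ⨅ i, (f i).eigenspace (χ i)

variable {f : ι → End K V}

theorem apply_eq_smul_of_mem_jointEigenspace {χ : ι → K} {v : V}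
    (hv : v ∈ jointEigenspace f χ) (i : ι) : f i v = χ i • v :=
  mem_eigenspace_iff.mp ((Submodule.mem_iInf _).mp hv i)

theorem iSupIndep_jointEigenspace (hcomm : ∀ i j, Commute (f i) (f j)) :
    iSupIndep (jointEigenspace f) :=
  (independent_iInf_maxGenEigenspace_of_forall_mapsTo f
    fun i j _ => mapsTo_maxGenEigenspace_of_comm (hcomm j i) _).mono
    fun _ => iInf_mono fun _ => eigenspace_le_maxGenEigenspace

theorem iSup_jointEigenspace_eq_top [IsAlgClosed K] [FiniteDimensional K V]
    (hcomm : ∀ i j, Commute (f i) (f j)) (hss : ∀ i, (f i).IsSemisimple) :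
    ⨆ χ, jointEigenspace f χ = ⊤ := by
  have h := iSup_iInf_maxGenEigenspace_eq_top_of_iSup_maxGenEigenspace_eq_top_of_commute f
    (fun i j _ => hcomm i j) fun i => iSup_maxGenEigenspace_eq_top (f i)
  simpa only [jointEigenspace, (hss _).isFinitelySemisimple.maxGenEigenspace_eq_eigenspace] using h

theorem eq_of_forall_jointEigenspace_ne_bot (htop : ⨆ χ, jointEigenspace f χ = ⊤) {i j : ι}
    (h : ∀ χ, jointEigenspace f χ ≠ ⊥ → χ i = χ j) : f i = f j := by
  suffices (⊤ : Submodule K V) ≤ LinearMap.eqLocus (f i) (f j) from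
    LinearMap.ext fun v => this Submodule.mem_top
  refine htop ▸ iSup_le fun χ => ?_
  rcases eq_or_ne (jointEigenspace f χ) ⊥ with hχ | hχ
  · exact hχ ▸ bot_le
  · intro v hv
    simp only [LinearMap.mem_eqLocus, apply_eq_smul_of_mem_jointEigenspace hv, h χ hχ]

theorem natCard_le_pow_finrank_of_commute_of_pow_eq_one [IsAlgClosed K] [FiniteDimensional K V]
    (hf : Function.Injective f) (hcomm : ∀ i j, Commute (f i) (f j)) {m : ℕ} (hm : (m : K) ≠ 0)
    (hpow : ∀ i, f i ^ m = 1) : Nat.card ι ≤ m ^ finrank K V := by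
  classical
  have hm0 : 0 < m := Nat.pos_of_ne_zero (by rintro rfl; simp at hm)
  let S := {χ : ι → K // jointEigenspace f χ ≠ ⊥}
  have hind := iSupIndep_jointEigenspace hcomm
  let _ : Fintype S := hind.fintypeNeBotOfFiniteDimensional
  have hroot (χ : S) (i : ι) : χ.1 i ∈ nthRootsFinset m (1 : K) := by
    obtain ⟨v, hv, hv0⟩ := Submodule.exists_mem_ne_zero_of_ne_bot χ.2
    have hvec : (f i).HasEigenvector (χ.1 i) v :=
      ⟨mem_eigenspace_iff.mpr (apply_eq_smul_of_mem_jointEigenspace hv i), hv0⟩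
    exact (mem_nthRootsFinset hm0 1).mpr (hvec.pow_eq_one (hpow i))
  let Φ : ι → S → nthRootsFinset m (1 : K) := fun i χ => ⟨χ.1 i, hroot χ i⟩
  have hΦ : Function.Injective Φ := fun i j h => hf <|
    eq_of_forall_jointEigenspace_ne_bot
      (iSup_jointEigenspace_eq_top hcomm fun i => isSemisimple_of_pow_eq_one hm (hpow i))
      fun χ hχ => congrArg Subtype.val (congrFun h ⟨χ, hχ⟩)
  calc Nat.card ι ≤ Nat.card (S → nthRootsFinset m (1 : K)) := Nat.card_le_card_of_injective Φ hΦ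
    _ = (nthRootsFinset m (1 : K)).card ^ Fintype.card S := by
      simp [Nat.card_eq_fintype_card]
    _ ≤ m ^ Fintype.card S := by
      gcongr
      rw [nthRootsFinset_def]
      exact (Multiset.toFinset_card_le _).trans (card_nthRoots m 1)
    _ ≤ m ^ finrank K V := Nat.pow_le_pow_right hm0 hind.subtype_ne_bot_le_finrank

end Module.End

theorem Matrix.natCard_le_pow_of_commute_of_pow_eq_one {K ι ν : Type*} [Field K] [Fintype ν]
    [DecidableEq ν] {f : ι → Matrix ν ν K} (hf : Function.Injective f)
    (hcomm : ∀ i j, Commute (f i) (f j)) {m : ℕ} (hm : (m : K) ≠ 0) (hpow : ∀ i, f i ^ m = 1) :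
    Nat.card ι ≤ m ^ Fintype.card ν := by
  let L := AlgebraicClosure K
  let φ : Matrix ν ν K →+* Module.End L (ν → L) :=
    Matrix.toLinAlgEquiv'.toRingHom.comp (algebraMap K L).mapMatrix
  have hφ : Function.Injective φ :=
    Matrix.toLinAlgEquiv'.injective.comp (Matrix.map_injective (algebraMap K L).injective)
  simpa using Module.End.natCard_le_pow_finrank_of_commute_of_pow_eq_one (hφ.comp hf)
    (fun i j => (hcomm i j).map φ) (by simpa [L] using (algebraMap K L).injective.ne hm)
    fun i => by rw [Function.comp_apply, ← map_pow, hpow, map_one]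

/-- The group `(⊕_{i ∈ ℕ} ℤ/3ℤ) × ℤ` has no faithful finite-dimensional linear
representation over any field of characteristic different from `3`. -/
theorem stmt_9 (K : Type) [Field K] (hK : ringChar K ≠ 3) (n : ℕ) :
    ¬ ∃ f : Multiplicative ((Π₀ _ : ℕ, ZMod 3) × ℤ) →* GL (Fin n) K,
      Function.Injective f := by
  rintro ⟨f, hf⟩
  have h3 : ((3 : ℕ) : K) ≠ 0 := fun h => hK (CharP.ringChar_of_prime_eq_zero Nat.prime_three h)
  let s := Finset.range (n + 1)
  let g : (s → ZMod 3) → Multiplicative ((Π₀ _ : ℕ, ZMod 3) × ℤ) :=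
    fun x => Multiplicative.ofAdd (DFinsupp.mk s x, 0)
  have hg : Function.Injective g := fun x y h =>
    DFinsupp.mk_injective s (congrArg Prod.fst (Multiplicative.ofAdd.injective h))
  have hg3 (x : s → ZMod 3) : g x ^ 3 = 1 :=
    Multiplicative.toAdd.injective <| Prod.ext (ZModModule.char_nsmul_eq_zero 3 _) (nsmul_zero 3)
  let ρ := (Units.coeHom (Matrix (Fin n) (Fin n) K)).comp f
  have hcard := Matrix.natCard_le_pow_of_commute_of_pow_eq_one (f := ρ ∘ g)
    ((Units.val_injective.comp hf).comp hg) (fun x y => (Commute.all _ _).map ρ) h3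
    fun x => by simp [← map_pow, hg3]
  rw [Nat.card_fun, Nat.card_zmod, Nat.card_eq_finsetCard, Finset.card_range,
    Fintype.card_fin] at hcard
  exact (Nat.pow_lt_pow_right (by norm_num) n.lt_succ_self).not_ge hcard
end
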